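/- Let C be a partial affine plane every finite subset of which is open, let A ⊆ C be such that A ≤_o C, and let c ∈ C ∖ A be such that one of the following holds: (a) c is a point incident with exactly two lines of A; (b) c is a line incident with exactly two points of A and parallel to no line of A; (c) c is a line incident with exactly one point of A and parallel to some line of A. Then A ∪ {c} ≤_o C. -/

import Mathlib

namespace Affine

variable {P L : Type}

/-- The lines of `X` incident with the point `p`. -/
def linesThru (I : P → L → Prop) (X : Set (P ⊕ L)) (p : P) : Set L :=
  {l : L | Sum.inr l ∈ X ∧ I p l}

/-- The points of `X` incident with the line `l`. -/
def pointsOn (I : P → L → Prop) (X : Set (P ⊕ L)) (l : L) : Set P :=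
  {p : P | Sum.inl p ∈ X ∧ I p l}

/-- An element is hyperfree in `X` if it is a point incident with at most two lines of `X`,
or a line incident with at most one point of `X`, or a line incident with exactly two points
of `X` and parallel to no other line of `X`. -/
def Hyperfree (I : P → L → Prop) (Par : L → L → Prop) (X : Set (P ⊕ L)) :
    (P ⊕ L) → Prop
  | Sum.inl p => (linesThru I X p).encard ≤ 2
  | Sum.inr l => (pointsOn I X l).encard ≤ 1 ∨
      ((pointsOn I X l).encard = 2 ∧
        ∀ l' : L, Sum.inr l' ∈ X → l' ≠ l → ¬ Par l l')

/-- `B` is open over `A`. -/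
def OpenOver (I : P → L → Prop) (Par : L → L → Prop) (A B : Set (P ⊕ L)) : Prop :=
  ∀ C : Set (P ⊕ L), C ⊆ B \ A → C.Finite → C.Nonempty →
    ∃ c ∈ C, Hyperfree I Par (A ∪ C) c

/-- `B` is open. -/
def IsOpen (I : P → L → Prop) (Par : L → L → Prop) (B : Set (P ⊕ L)) : Prop :=
  ∀ C : Set (P ⊕ L), C ⊆ B → C.Finite → C.Nonempty →
    ∃ c ∈ C, Hyperfree I Par C c

/-- `X` is a partial affine plane: parallelism is an equivalence relation on lines of `X`;
two distinct points of `X` are incident with at most one common line of `X`; two non-parallel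
lines of `X` are incident with at most one common point of `X`; for every point of `X` and
every line of `X` there is at most one line of `X` incident with the point and parallel to
the line. -/
def IsPartialAffine (I : P → L → Prop) (Par : L → L → Prop) (X : Set (P ⊕ L)) : Prop :=
  (∀ l : L, Sum.inr l ∈ X → Par l l) ∧
  (∀ l l' : L, Sum.inr l ∈ X → Sum.inr l' ∈ X → Par l l' → Par l' l) ∧
  (∀ l l' l'' : L, Sum.inr l ∈ X → Sum.inr l' ∈ X → Sum.inr l'' ∈ X →
    Par l l' → Par l' l'' → Par l l'') ∧
  (∀ p q : P, p ≠ q → Sum.inl p ∈ X → Sum.inl q ∈ X →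
    ∀ l l' : L, Sum.inr l ∈ X → Sum.inr l' ∈ X →
      I p l → I q l → I p l' → I q l' → l = l') ∧
  (∀ l l' : L, ¬ Par l l' → Sum.inr l ∈ X → Sum.inr l' ∈ X →
    ∀ p q : P, Sum.inl p ∈ X → Sum.inl q ∈ X →
      I p l → I p l' → I q l → I q l' → p = q) ∧
  (∀ p : P, Sum.inl p ∈ X → ∀ l : L, Sum.inr l ∈ X →
    ∀ l' l'' : L, Sum.inr l' ∈ X → Sum.inr l'' ∈ X →
      I p l' → Par l' l → I p l'' → Par l'' l → l' = l'')

end Affine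

/-
Let `D` be a finite nonempty set of new elements. Openness of `A` applied to `D ∪ {c}` yields an
element hyperfree in `A ∪ D ∪ {c}`; if it lies in `D` we are done. Otherwise `c` is hyperfree
there, and since `A` alone already gives `c` as many incidences as hyperfreeness allows, `c` is
incident with no element of `D`; in case (c) every line parallel to `c` is also parallel to a line
of `A`. Adding such a `c` cannot destroy hyperfreeness, so the element that openness of `A`
provides for `D` itself is still hyperfree in `A ∪ {c} ∪ D`.
-/

namespace Affine

variable {P L : Type}

section Incidence

variable {I : P → L → Prop} {X : Set (P ⊕ L)}

lemma linesThru_mono {Y : Set (P ⊕ L)} (h : X ⊆ Y) (p : P) :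
    linesThru I X p ⊆ linesThru I Y p :=
  fun _ hm => ⟨h hm.1, hm.2⟩

lemma pointsOn_mono {Y : Set (P ⊕ L)} (h : X ⊆ Y) (l : L) :
    pointsOn I X l ⊆ pointsOn I Y l :=
  fun _ hq => ⟨h hq.1, hq.2⟩

@[simp]
lemma linesThru_insert_inl (p q : P) :
    linesThru I (insert (Sum.inl p) X) q = linesThru I X q := by
  ext m
  simp [linesThru]

@[simp]
lemma pointsOn_insert_inr (l m : L) :
    pointsOn I (insert (Sum.inr l) X) m = pointsOn I X m := by
  ext q
  simp [pointsOn]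

lemma linesThru_insert_inr_of_not_incident {q : P} {l : L} (h : ¬ I q l) :
    linesThru I (insert (Sum.inr l) X) q = linesThru I X q := by
  ext m
  simp only [linesThru, Set.mem_insert_iff, Sum.inr.injEq, Set.mem_ofPred_eq]
  constructor
  · rintro ⟨rfl | hm, hqm⟩
    · exact absurd hqm h
    · exact ⟨hm, hqm⟩
  · exact fun ⟨hm, hqm⟩ => ⟨Or.inr hm, hqm⟩

lemma pointsOn_insert_inl_of_not_incident {p : P} {m : L} (h : ¬ I p m) :
    pointsOn I (insert (Sum.inl p) X) m = pointsOn I X m := by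
  ext q
  simp only [pointsOn, Set.mem_insert_iff, Sum.inl.injEq, Set.mem_ofPred_eq]
  constructor
  · rintro ⟨rfl | hq, hqm⟩
    · exact absurd hqm h
    · exact ⟨hq, hqm⟩
  · exact fun ⟨hq, hqm⟩ => ⟨Or.inr hq, hqm⟩

end Incidence

section Hyperfree

variable {I : P → L → Prop} {Par : L → L → Prop} {X : Set (P ⊕ L)}

lemma Hyperfree.pointsOn_encard_le_two {l : L} (h : Hyperfree I Par X (Sum.inr l)) :
    (pointsOn I X l).encard ≤ 2 := by
  rcases h with h | ⟨h, -⟩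
  · exact h.trans (by norm_num)
  · exact h.le

lemma Hyperfree.pointsOn_encard_le_one_of_par {l l' : L} (h : Hyperfree I Par X (Sum.inr l))
    (hl' : Sum.inr l' ∈ X) (hne : l' ≠ l) (hpar : Par l l') :
    (pointsOn I X l).encard ≤ 1 :=
  h.resolve_right fun ⟨_, hnpar⟩ => hnpar l' hl' hne hpar

lemma Hyperfree.insert_inl {p : P} {e : P ⊕ L} (he : Hyperfree I Par X e)
    (hinc : ∀ m, e = Sum.inr m → ¬ I p m) :
    Hyperfree I Par (insert (Sum.inl p) X) e := by
  match e, he with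
  | Sum.inl q, he => simpa [Hyperfree] using he
  | Sum.inr m, he =>
    rcases he with he | ⟨he, hnpar⟩
    · exact Or.inl <| by rwa [pointsOn_insert_inl_of_not_incident (hinc m rfl)]
    · refine Or.inr ⟨by rwa [pointsOn_insert_inl_of_not_incident (hinc m rfl)], ?_⟩
      rintro l' (hl' | hl')
      · exact absurd hl' Sum.inr_ne_inl
      · exact hnpar l' hl'

lemma Hyperfree.insert_inr {l : L} {e : P ⊕ L} (he : Hyperfree I Par X e)
    (hinc : ∀ q, e = Sum.inl q → ¬ I q l)
    (hpar : ∀ m, e = Sum.inr m → m ≠ l → Par m l →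
      ∃ l', Sum.inr l' ∈ X ∧ l' ≠ m ∧ Par m l') :
    Hyperfree I Par (insert (Sum.inr l) X) e := by
  match e, he with
  | Sum.inl q, he =>
    show (linesThru I _ q).encard ≤ 2
    rwa [linesThru_insert_inr_of_not_incident (hinc q rfl)]
  | Sum.inr m, he =>
    rcases he with he | ⟨he, hnpar⟩
    · exact Or.inl (by simpa using he)
    · refine Or.inr ⟨by simpa using he, ?_⟩
      rintro l' (hl' | hl') hne
      · cases hl'
        intro hml
        obtain ⟨l'', hl'', hne'', hpar''⟩ := hpar m rfl (Ne.symm hne) hml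
        exact hnpar l'' hl'' hne'' hpar''
      · exact hnpar l' hl' hne

end Hyperfree

section ExtensionCases

variable {I : P → L → Prop} {Par : L → L → Prop} {A D : Set (P ⊕ L)} {e : P ⊕ L}

lemma hyperfree_insert_point_of_two_lines {p : P} (hp : (linesThru I A p).encard = 2)
    (hpfree : Hyperfree I Par (insert (Sum.inl p) (A ∪ D)) (Sum.inl p))
    (heD : e ∈ D) (heA : e ∉ A) (he : Hyperfree I Par (A ∪ D) e) :
    Hyperfree I Par (insert (Sum.inl p) (A ∪ D)) e := by
  replace hpfree : (linesThru I (A ∪ D) p).encard ≤ 2 := by simpa [Hyperfree] using hpfree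
  have heq : linesThru I A p = linesThru I (A ∪ D) p :=
    (Set.finite_of_encard_eq_coe hp).eq_of_subset_of_encard_le
      (linesThru_mono Set.subset_union_left p) (hp ▸ hpfree)
  refine he.insert_inl fun m hem hpm => heA ?_
  subst hem
  exact (heq ▸ ⟨Or.inr heD, hpm⟩ : m ∈ linesThru I A p).1

lemma hyperfree_insert_line_of_two_points {l : L} (hl : (pointsOn I A l).encard = 2)
    (hsymm : ∀ m, Par m l → Par l m)
    (hlfree : Hyperfree I Par (insert (Sum.inr l) (A ∪ D)) (Sum.inr l))
    (heD : e ∈ D) (heA : e ∉ A) (he : Hyperfree I Par (A ∪ D) e) :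
    Hyperfree I Par (insert (Sum.inr l) (A ∪ D)) e := by
  have heq : pointsOn I A l = pointsOn I (A ∪ D) l :=
    (Set.finite_of_encard_eq_coe hl).eq_of_subset_of_encard_le
      (pointsOn_mono Set.subset_union_left l) (hl ▸ by simpa using hlfree.pointsOn_encard_le_two)
  obtain ⟨-, hnpar⟩ := hlfree.resolve_left (by rw [pointsOn_insert_inr, ← heq, hl]; decide)
  refine he.insert_inr (fun q heq' hql => heA ?_) (fun m hem hne hml => ?_)
  · subst heq'
    exact (heq ▸ ⟨Or.inr heD, hql⟩ : q ∈ pointsOn I A l).1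
  · subst hem
    exact absurd (hsymm m hml) (hnpar m (Or.inr (Or.inr heD)) hne)

lemma hyperfree_insert_line_of_one_point_of_par {l l₀ : L} (hl : (pointsOn I A l).encard = 1)
    (hl₀ : Sum.inr l₀ ∈ A) (hll₀ : Par l l₀) (hlA : Sum.inr l ∉ A)
    (htrans : ∀ m, Par m l → Par m l₀)
    (hlfree : Hyperfree I Par (insert (Sum.inr l) (A ∪ D)) (Sum.inr l))
    (heD : e ∈ D) (heA : e ∉ A) (he : Hyperfree I Par (A ∪ D) e) :
    Hyperfree I Par (insert (Sum.inr l) (A ∪ D)) e := by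
  have hle : (pointsOn I (A ∪ D) l).encard ≤ 1 := by
    simpa using hlfree.pointsOn_encard_le_one_of_par (Or.inr (Or.inl hl₀))
      (fun h => hlA (h ▸ hl₀)) hll₀
  have heq : pointsOn I A l = pointsOn I (A ∪ D) l :=
    (Set.finite_of_encard_eq_coe hl).eq_of_subset_of_encard_le
      (pointsOn_mono Set.subset_union_left l) (hl ▸ hle)
  refine he.insert_inr (fun q heq' hql => heA ?_) (fun m hem _ hml => ?_)
  · subst heq'
    exact (heq ▸ ⟨Or.inr heD, hql⟩ : q ∈ pointsOn I A l).1
  · subst hem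
    exact ⟨l₀, Or.inl hl₀, fun h => heA (h ▸ hl₀), htrans m hml⟩

end ExtensionCases

end Affine

open Affine

theorem stmt15_general {P L : Type} (I : P → L → Prop) (Par : L → L → Prop)
    (hpartial : IsPartialAffine I Par (Set.univ : Set (P ⊕ L)))
    (A : Set (P ⊕ L)) (hA : OpenOver I Par A Set.univ)
    (c : P ⊕ L) (hc : c ∉ A)
    (hcase :
      -- (a) c is a point incident with exactly two lines of A:
      (∃ p : P, c = Sum.inl p ∧ (linesThru I A p).encard = 2) ∨
      -- (b) c is a line incident with exactly two points of A and parallel to no line of A: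
      (∃ l : L, c = Sum.inr l ∧ (pointsOn I A l).encard = 2 ∧
        ∀ l' : L, Sum.inr l' ∈ A → ¬ Par l l') ∨
      -- (c) c is a line incident with exactly one point of A and parallel to a line of A:
      (∃ l : L, c = Sum.inr l ∧ (pointsOn I A l).encard = 1 ∧
        ∃ l' : L, Sum.inr l' ∈ A ∧ Par l l')) :
    OpenOver I Par (A ∪ {c}) Set.univ := by
  intro D hD hDfin hDne
  have hDA : D ⊆ Set.univ \ A := fun x hx => ⟨trivial, fun hxA => (hD hx).2 (Or.inl hxA)⟩
  obtain ⟨d, hd, hdfree⟩ := hA (insert c D) (Set.insert_subset ⟨trivial, hc⟩ hDA)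
    (hDfin.insert c) ⟨c, Set.mem_insert c D⟩
  rw [Set.union_singleton, Set.insert_union]
  rw [Set.union_insert] at hdfree
  rcases hd with rfl | hdD
  · obtain ⟨e, heD, he⟩ := hA D hDA hDfin hDne
    have heA : e ∉ A := (hDA heD).2
    refine ⟨e, heD, ?_⟩
    rcases hcase with ⟨p, rfl, hp⟩ | ⟨l, rfl, hl, -⟩ | ⟨l, rfl, hl, l₀, hl₀, hll₀⟩
    · exact hyperfree_insert_point_of_two_lines hp hdfree heD heA he
    · exact hyperfree_insert_line_of_two_points hl
        (fun m => hpartial.2.1 m l trivial trivial) hdfree heD heA he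
    · exact hyperfree_insert_line_of_one_point_of_par hl hl₀ hll₀ hc
        (fun m hml => hpartial.2.2.1 m l l₀ trivial trivial trivial hml hll₀) hdfree heD heA he
  · exact ⟨d, hdD, hdfree⟩

theorem stmt15 {P L : Type} (I : P → L → Prop) (Par : L → L → Prop)
    (hpartial : IsPartialAffine I Par (Set.univ : Set (P ⊕ L)))
    (hopen : IsOpen I Par (Set.univ : Set (P ⊕ L)))
    (A : Set (P ⊕ L)) (hA : OpenOver I Par A Set.univ)
    (c : P ⊕ L) (hc : c ∉ A)
    (hcase :
      -- (a) c is a point incident with exactly two lines of A: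
      (∃ p : P, c = Sum.inl p ∧ (linesThru I A p).encard = 2) ∨
      -- (b) c is a line incident with exactly two points of A and parallel to no line of A:
      (∃ l : L, c = Sum.inr l ∧ (pointsOn I A l).encard = 2 ∧
        ∀ l' : L, Sum.inr l' ∈ A → ¬ Par l l') ∨
      -- (c) c is a line incident with exactly one point of A and parallel to a line of A:
      (∃ l : L, c = Sum.inr l ∧ (pointsOn I A l).encard = 1 ∧
        ∃ l' : L, Sum.inr l' ∈ A ∧ Par l l')) :
    OpenOver I Par (A ∪ {c}) Set.univ :=
  stmt15_general I Par hpartial A hA c hc hcase
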